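/- arXiv:2603.23385 — 2 statements merged into one kernel-verified Lean document; each statement's English description precedes it below -/
import Mathlib

section
/- In the coupon collector problem with n coupon types drawn i.i.d. uniformly, let T be the first time every type has appeared and let S be the number of types that have appeared exactly once by time T. Then E[S] = H_n. -/
set_option linter.unusedSectionVars false

open Finset

private lemma alt_one (N : ℕ) :
    ∑ a ∈ Finset.range (N+1), (-1:ℝ)^a * ((N+1).choose (a+1) : ℝ) = 1 := by
  have h := Int.alternating_sum_range_choose (n := N+1)
  rw [if_neg (Nat.succ_ne_zero N)] at h
  have h2 : ∑ i ∈ Finset.range (N+2), (-1:ℝ)^i * ((N+1).choose i : ℝ) = 0 := by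
    exact_mod_cast congrArg (Int.cast : ℤ → ℝ) h
  rw [Finset.sum_range_succ'] at h2
  have h3 : ∑ i ∈ Finset.range (N+1), (-1:ℝ)^(i+1) * ((N+1).choose (i+1) : ℝ)
      = -∑ i ∈ Finset.range (N+1), (-1:ℝ)^i * ((N+1).choose (i+1) : ℝ) := by
    rw [← Finset.sum_neg_distrib]
    refine Finset.sum_congr rfl fun i _ => by ring
  rw [h3] at h2
  simp at h2
  linarith

private lemma alt_choose_harmonic (N : ℕ) :
    ∑ a ∈ Finset.range N, (-1:ℝ)^a * ((N.choose (a+1) : ℝ)) / (a+1)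
      = ∑ k ∈ Finset.Icc 1 N, (1:ℝ)/k := by
  induction N with
  | zero => simp
  | succ N ih =>
    have hsplit : ∀ a : ℕ, (-1:ℝ)^a * (((N+1).choose (a+1) : ℝ)) / (a+1)
        = (-1:ℝ)^a * ((N.choose (a+1) : ℝ)) / (a+1)
          + (-1:ℝ)^a * ((N.choose a : ℝ)) / (a+1) := by
      intro a
      have : ((N+1).choose (a+1) : ℝ) = (N.choose (a+1) : ℝ) + (N.choose a : ℝ) := by
        rw [Nat.choose_succ_succ]; push_cast; ring
      rw [this]; ring
    rw [Finset.sum_congr rfl fun a _ => hsplit a, Finset.sum_add_distrib]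
    have h1 : ∑ a ∈ Finset.range (N+1), (-1:ℝ)^a * ((N.choose (a+1) : ℝ)) / (a+1)
        = ∑ k ∈ Finset.Icc 1 N, (1:ℝ)/k := by
      rw [Finset.sum_range_succ, Nat.choose_succ_self]
      simpa using ih
    have h2 : ∑ a ∈ Finset.range (N+1), (-1:ℝ)^a * ((N.choose a : ℝ)) / (a+1)
        = 1/(N+1) := by
      have key : ∀ a : ℕ, (-1:ℝ)^a * ((N.choose a : ℝ)) / (a+1)
          = (-1:ℝ)^a * (((N+1).choose (a+1) : ℝ)) / (N+1) := by
        intro a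
        have hc : ((N:ℝ)+1) * (N.choose a : ℝ) = ((N+1).choose (a+1) : ℝ) * ((a:ℝ)+1) := by
          exact_mod_cast congrArg (Nat.cast : ℕ → ℝ) (Nat.add_one_mul_choose_eq N a)
        have ha : ((a:ℝ)+1) ≠ 0 := by positivity
        have hN : ((N:ℝ)+1) ≠ 0 := by positivity
        field_simp
        linear_combination hc
      rw [Finset.sum_congr rfl fun a _ => key a]
      rw [← Finset.sum_div]
      rw [alt_one N]
    rw [h1, h2, Finset.sum_Icc_succ_top (by omega : 1 ≤ N + 1)]
    push_cast
    ring

private lemma series_sum {r q : ℝ} (hr : 0 ≤ r) (hq0 : 0 ≤ q) (hq1 : q < 1) :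
    Summable (fun p : ℕ × ℕ => if p.1 < p.2 then r * q^(p.2-1) else 0) ∧
    ∑' p : ℕ × ℕ, (if p.1 < p.2 then r * q^(p.2-1) else 0) = r / (1-q)^2 := by
  set F : ℕ × ℕ → ℝ := fun p => if p.1 < p.2 then r * q^(p.2-1) else 0 with hF
  have hnonneg : ∀ p, 0 ≤ F p := by
    intro p; simp only [hF]; split <;> positivity
  have hslice : ∀ t1 : ℕ, HasSum (fun t2 => F (t1, t2)) (r * q^t1 * (1-q)⁻¹) := by
    intro t1
    have hgeo' : HasSum (fun k : ℕ => F (t1, k + (t1+1))) (r * q^t1 * (1-q)⁻¹) := by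
      have h := (hasSum_geometric_of_lt_one hq0 hq1).mul_left (r * q^t1)
      have heq : (fun k : ℕ => F (t1, k+(t1+1))) = fun k : ℕ => (r*q^t1) * q^k := by
        funext k
        simp only [hF]
        rw [if_pos (by omega), show k+(t1+1)-1 = t1+k from by omega, pow_add]
        ring
      rw [heq]
      exact h
    have key := (hasSum_nat_add_iff (f := fun t2 => F (t1, t2)) (t1+1)).mp hgeo'
    have hz : ∑ i ∈ Finset.range (t1+1), F (t1, i) = 0 := by
      refine Finset.sum_eq_zero fun i hi => ?_
      simp only [hF]
      rw [if_neg]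
      simp only [Finset.mem_range] at hi; omega
    rwa [hz, add_zero] at key
  have houter : HasSum (fun t1 : ℕ => r * q^t1 * (1-q)⁻¹) (r / (1-q)^2) := by
    have h := (hasSum_geometric_of_lt_one hq0 hq1).mul_left (r * (1-q)⁻¹)
    have : r * (1-q)⁻¹ * (1-q)⁻¹ = r / (1-q)^2 := by
      rw [sq]; field_simp
    rw [this] at h
    refine h.congr fun t1 => by ring_nf
  have hsumm : Summable F := by
    rw [summable_prod_of_nonneg hnonneg]
    refine ⟨fun t1 => (hslice t1).summable, ?_⟩
    refine houter.summable.congr fun t1 => ?_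
    rw [(hslice t1).tsum_eq]
  refine ⟨hsumm, ?_⟩
  rw [Summable.tsum_prod' hsumm fun t1 => (hslice t1).summable]
  calc ∑' t1, ∑' t2, F (t1, t2) = ∑' t1 : ℕ, r * q^t1 * (1-q)⁻¹ := by
        refine tsum_congr fun t1 => (hslice t1).tsum_eq
    _ = r / (1-q)^2 := houter.tsum_eq

open MeasureTheory ProbabilityTheory

section CC
variable {Ω : Type*} [MeasurableSpace Ω] {μ : Measure Ω} [IsProbabilityMeasure μ]
  {n : ℕ} {X : ℕ → Ω → Fin n}

private def DD (X : ℕ → Ω → Fin n) (c : Fin n) (A : Finset (Fin n)) (p : ℕ × ℕ) : Set Ω :=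
  if p.1 < p.2 then
    {ω | X p.1 ω = c ∧ X p.2 ω = c ∧ ∀ s < p.2, s ≠ p.1 → X s ω ∉ insert c A}
  else ∅

private def GG (X : ℕ → Ω → Fin n) (c : Fin n) (A : Finset (Fin n)) : Set Ω :=
  ⋃ p : ℕ × ℕ, DD X c A p

private lemma DD_eq_iInter (c : Fin n) (A : Finset (Fin n)) {p : ℕ × ℕ} (hp : p.1 < p.2) :
    DD X c A p = ⋂ s ∈ Finset.range (p.2+1),
      X s ⁻¹' (if s = p.1 ∨ s = p.2 then {c} else (↑(insert c A) : Set (Fin n))ᶜ) := by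
  rw [DD, if_pos hp]
  ext ω
  simp only [Set.mem_setOf_eq, Set.mem_iInter, Finset.mem_range]
  constructor
  · rintro ⟨h1, h2, h3⟩ s hs
    by_cases hs1 : s = p.1
    · subst hs1; rw [if_pos (Or.inl rfl)]; exact h1
    by_cases hs2 : s = p.2
    · subst hs2; rw [if_pos (Or.inr rfl)]; exact h2
    · rw [if_neg (by tauto)]
      exact h3 s (by omega) hs1
  · intro h
    refine ⟨?_, ?_, ?_⟩
    · have := h p.1 (by omega); rwa [if_pos (Or.inl rfl)] at this
    · have := h p.2 (by omega); rwa [if_pos (Or.inr rfl)] at this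
    · intro s hs hs1
      have := h s (by omega)
      rw [if_neg (by omega)] at this
      exact this

private lemma DD_measurable (hmeas : ∀ t, Measurable (X t)) (c : Fin n) (A : Finset (Fin n))
    (p : ℕ × ℕ) : MeasurableSet (DD X c A p) := by
  by_cases hp : p.1 < p.2
  · rw [DD_eq_iInter c A hp]
    exact Finset.measurableSet_biInter _ fun s _ => (hmeas s) .of_discrete
  · rw [DD, if_neg hp]; exact MeasurableSet.empty

private lemma DD_eq_of_mem {ω : Ω} {c : Fin n} {A : Finset (Fin n)} {p p' : ℕ × ℕ}
    (h : ω ∈ DD X c A p) (h' : ω ∈ DD X c A p') : p = p' := by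
  have key : ∀ q q' : ℕ × ℕ, ω ∈ DD X c A q → ω ∈ DD X c A q' → ¬ q'.2 < q.2 := by
    intro q q' hq hq' hlt
    rw [DD] at hq hq'
    by_cases hq1 : q.1 < q.2
    swap; · simp [if_neg hq1] at hq
    by_cases hq'1 : q'.1 < q'.2
    swap; · simp [if_neg hq'1] at hq'
    rw [if_pos hq1] at hq; rw [if_pos hq'1] at hq'
    obtain ⟨ha1, ha2, ha3⟩ := hq
    obtain ⟨hb1, hb2, hb3⟩ := hq'
    by_cases hc : q'.2 = q.1
    · have h1 : q'.1 < q.2 := by omega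
      have h2 : q'.1 ≠ q.1 := by omega
      exact ha3 q'.1 h1 h2 (by rw [hb1]; exact Finset.mem_insert_self c A)
    · exact ha3 q'.2 hlt hc (by rw [hb2]; exact Finset.mem_insert_self c A)
  have h2 : p.2 = p'.2 := by
    have := key p p' h h'
    have := key p' p h' h
    omega
  have h1 : p.1 = p'.1 := by
    by_contra hne
    rw [DD] at h h'
    by_cases hq1 : p.1 < p.2
    swap; · simp [if_neg hq1] at h
    by_cases hq'1 : p'.1 < p'.2
    swap; · simp [if_neg hq'1] at h'
    rw [if_pos hq1] at h; rw [if_pos hq'1] at h'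
    exact h'.2.2 p.1 (by omega) hne (by rw [h.1]; exact Finset.mem_insert_self c A)
  exact Prod.ext h1 h2

private lemma meas_inter_preimage (hindep : iIndepFun X μ)
    (F : Finset ℕ) (B : ℕ → Set (Fin n)) :
    μ (⋂ s ∈ F, X s ⁻¹' B s) = ∏ s ∈ F, μ (X s ⁻¹' B s) :=
  hindep.measure_inter_preimage_eq_mul F (fun _ _ => .of_discrete)

private lemma meas_preimage_finset (hn : 1 ≤ n) (hmeas : ∀ t, Measurable (X t))
    (hunif : ∀ t c, μ {ω | X t ω = c} = 1 / n) (t : ℕ) (B : Finset (Fin n)) :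
    μ (X t ⁻¹' ↑B) = ENNReal.ofReal (B.card / n) := by
  classical
  induction B using Finset.induction with
  | empty => simp
  | @insert x B hx ih =>
    have hdisj : Disjoint (X t ⁻¹' {x}) (X t ⁻¹' ↑B) := by
      refine Set.disjoint_left.mpr fun ω h1 h2 => ?_
      simp only [Set.mem_preimage, Set.mem_singleton_iff] at h1
      simp only [Set.mem_preimage, Finset.mem_coe] at h2
      rw [h1] at h2
      exact hx h2
    have : (↑(insert x B) : Set (Fin n)) = {x} ∪ ↑B := by
      simp [Finset.coe_insert]
    rw [this, Set.preimage_union, measure_union hdisj ((hmeas t) .of_discrete)]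
    have h1 : μ (X t ⁻¹' {x}) = ENNReal.ofReal (1 / n) := by
      have : X t ⁻¹' {x} = {ω | X t ω = x} := rfl
      rw [this, hunif t x]
      rw [ENNReal.ofReal_div_of_pos (by exact_mod_cast hn), ENNReal.ofReal_one,
        ENNReal.ofReal_natCast]
    rw [h1, ih, ← ENNReal.ofReal_add (by positivity) (by positivity)]
    congr 1
    rw [Finset.card_insert_of_notMem hx]
    push_cast
    ring

private lemma meas_preimage_compl (hn : 1 ≤ n) (hmeas : ∀ t, Measurable (X t))
    (hunif : ∀ t c, μ {ω | X t ω = c} = 1 / n) (t : ℕ) (B : Finset (Fin n)) :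
    μ (X t ⁻¹' (↑B)ᶜ) = ENNReal.ofReal (1 - B.card / n) := by
  rw [Set.preimage_compl, prob_compl_eq_one_sub ((hmeas t) .of_discrete),
    meas_preimage_finset hn hmeas hunif t B,
    ← ENNReal.ofReal_one, ← ENNReal.ofReal_sub _ (by positivity)]

private lemma card_le_of_subset_erase {c : Fin n} {A : Finset (Fin n)}
    (hA : A ⊆ Finset.univ.erase c) (hn : 1 ≤ n) : (A.card : ℝ) + 1 ≤ n := by
  have h := Finset.card_le_card hA
  rw [Finset.card_erase_of_mem (Finset.mem_univ c), Finset.card_univ, Fintype.card_fin] at h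
  have : A.card + 1 ≤ n := by omega
  exact_mod_cast this

private lemma meas_DD (hn : 1 ≤ n) (hmeas : ∀ t, Measurable (X t))
    (hindep : iIndepFun X μ)
    (hunif : ∀ t c, μ {ω | X t ω = c} = 1 / n)
    {c : Fin n} {A : Finset (Fin n)} (hA : A ⊆ Finset.univ.erase c) (p : ℕ × ℕ) :
    μ (DD X c A p) = ENNReal.ofReal
      (if p.1 < p.2 then (1/n:ℝ)^2 * (1 - ((A.card:ℝ)+1)/n)^(p.2-1) else 0) := by
  by_cases hp : p.1 < p.2
  swap
  · rw [DD, if_neg hp, if_neg hp]; simp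
  rw [if_pos hp, DD_eq_iInter c A hp, meas_inter_preimage hindep]
  set q : ℝ := 1 - ((A.card:ℝ)+1)/n with hq
  have hq0 : 0 ≤ q := by
    have := card_le_of_subset_erase hA hn
    have hn' : (0:ℝ) < n := by exact_mod_cast hn
    rw [hq]
    rw [sub_nonneg, div_le_one hn']
    exact this
  have hfac : ∀ s ∈ Finset.range (p.2+1),
      μ (X s ⁻¹' (if s = p.1 ∨ s = p.2 then {c} else (↑(insert c A) : Set (Fin n))ᶜ))
      = if s = p.1 ∨ s = p.2 then ENNReal.ofReal (1/n) else ENNReal.ofReal q := by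
    intro s _
    by_cases hs : s = p.1 ∨ s = p.2
    · rw [if_pos hs, if_pos hs]
      have : X s ⁻¹' {c} = {ω | X s ω = c} := rfl
      rw [this, hunif s c, ENNReal.ofReal_div_of_pos (by exact_mod_cast hn),
        ENNReal.ofReal_one, ENNReal.ofReal_natCast]
    · rw [if_neg hs, if_neg hs, meas_preimage_compl hn hmeas hunif]
      congr 1
      rw [hq]
      congr 2
      rw [Finset.card_insert_of_notMem (fun hc => by
        have := hA hc
        exact (Finset.ne_of_mem_erase this) rfl)]
      push_cast; ring
  rw [Finset.prod_congr rfl hfac, Finset.prod_ite, Finset.prod_const, Finset.prod_const]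
  have hfilter : Finset.filter (fun s => s = p.1 ∨ s = p.2) (Finset.range (p.2+1))
      = {p.1, p.2} := by
    ext s
    simp only [Finset.mem_filter, Finset.mem_range, Finset.mem_insert, Finset.mem_singleton]
    constructor
    · rintro ⟨_, h⟩; exact h
    · rintro (rfl | rfl) <;> constructor <;> first | omega | tauto
  have hcard1 : (Finset.filter (fun s => s = p.1 ∨ s = p.2) (Finset.range (p.2+1))).card = 2 := by
    rw [hfilter, Finset.card_insert_of_notMem (by simp; omega), Finset.card_singleton]
  have hcard2 : (Finset.filter (fun s => ¬(s = p.1 ∨ s = p.2)) (Finset.range (p.2+1))).card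
      = p.2 - 1 := by
    have := Finset.card_filter_add_card_filter_not
      (s := Finset.range (p.2+1)) (p := fun s => s = p.1 ∨ s = p.2)
    rw [hcard1, Finset.card_range] at this
    omega
  rw [hcard1, hcard2, ← ENNReal.ofReal_pow (by positivity), ← ENNReal.ofReal_pow hq0,
    ← ENNReal.ofReal_mul (by positivity)]

private lemma meas_GG (hn : 1 ≤ n) (hmeas : ∀ t, Measurable (X t))
    (hindep : iIndepFun X μ)
    (hunif : ∀ t c, μ {ω | X t ω = c} = 1 / n)
    {c : Fin n} {A : Finset (Fin n)} (hA : A ⊆ Finset.univ.erase c) :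
    μ (GG X c A) = ENNReal.ofReal (1 / ((A.card:ℝ)+1)^2) := by
  have hn' : (0:ℝ) < n := by exact_mod_cast hn
  set q : ℝ := 1 - ((A.card:ℝ)+1)/n with hq
  have hcard := card_le_of_subset_erase hA hn
  have hq0 : 0 ≤ q := by rw [hq, sub_nonneg, div_le_one hn']; exact hcard
  have hq1 : q < 1 := by
    rw [hq]
    have : (0:ℝ) < ((A.card:ℝ)+1)/n := by positivity
    linarith
  have hr : (0:ℝ) ≤ (1/n:ℝ)^2 := by positivity
  obtain ⟨hsumm, htsum⟩ := series_sum hr hq0 hq1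
  rw [GG, measure_iUnion
    (fun p p' hne => Set.disjoint_left.mpr fun ω h h' => hne (DD_eq_of_mem h h'))
    (DD_measurable hmeas c A)]
  calc ∑' p : ℕ × ℕ, μ (DD X c A p)
      = ∑' p : ℕ × ℕ, ENNReal.ofReal (if p.1 < p.2 then (1/n:ℝ)^2 * q^(p.2-1) else 0) := by
        refine tsum_congr fun p => ?_
        rw [meas_DD hn hmeas hindep hunif hA p]
    _ = ENNReal.ofReal (∑' p : ℕ × ℕ, if p.1 < p.2 then (1/n:ℝ)^2 * q^(p.2-1) else 0) := by
        rw [ENNReal.ofReal_tsum_of_nonneg (fun p => by split <;> positivity) hsumm]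
    _ = ENNReal.ofReal (1 / ((A.card:ℝ)+1)^2) := by
        rw [htsum]
        congr 1
        have h1q : 1 - q = ((A.card:ℝ)+1)/n := by rw [hq]; ring
        rw [h1q]
        field_simp

private def Good (X : ℕ → Ω → Fin n) : Set Ω :=
  {ω | ∀ c : Fin n, ∃ t1 t2 : ℕ, t1 < t2 ∧ X t1 ω = c ∧ X t2 ω = c}

private lemma meas_avoid (hn : 1 ≤ n) (hmeas : ∀ t, Measurable (X t))
    (hindep : iIndepFun X μ)
    (hunif : ∀ t c, μ {ω | X t ω = c} = 1 / n) (c : Fin n) (F : Finset ℕ) :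
    μ (⋂ s ∈ F, X s ⁻¹' ({c}ᶜ : Set (Fin n))) = ENNReal.ofReal ((1 - 1/n : ℝ) ^ F.card) := by
  have hn' : (0:ℝ) < n := by exact_mod_cast hn
  have hterm : ∀ s ∈ F, μ (X s ⁻¹' ({c}ᶜ : Set (Fin n))) = ENNReal.ofReal (1 - 1/n : ℝ) := by
    intro s _
    have hs : ({c}ᶜ : Set (Fin n)) = (↑({c} : Finset (Fin n)) : Set (Fin n))ᶜ := by simp
    rw [hs, meas_preimage_compl hn hmeas hunif]
    norm_num
  rw [meas_inter_preimage hindep, Finset.prod_congr rfl hterm, Finset.prod_const,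
    ← ENNReal.ofReal_pow (by rw [sub_nonneg, div_le_one hn']; exact_mod_cast hn)]

private lemma good_ae (hn : 1 ≤ n) (hmeas : ∀ t, Measurable (X t))
    (hindep : iIndepFun X μ)
    (hunif : ∀ t c, μ {ω | X t ω = c} = 1 / n) :
    Good X ∈ ae μ := by
  rw [mem_ae_iff]
  have hcompl : (Good X)ᶜ = ⋃ c : Fin n,
      {ω | ¬ ∃ t1 t2 : ℕ, t1 < t2 ∧ X t1 ω = c ∧ X t2 ω = c} := by
    ext ω; simp [Good]
  rw [hcompl]
  refine measure_iUnion_null fun c => ?_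
  set q : ℝ := 1 - 1/n with hqdef
  have hn' : (0:ℝ) < n := by exact_mod_cast hn
  have hn'' : (1:ℝ)/n ≤ 1 := by rw [div_le_one hn']; exact_mod_cast hn
  have hq0 : 0 ≤ q := by rw [hqdef, sub_nonneg]; exact hn''
  have hq1 : q < 1 := by
    have : (0:ℝ) < 1/n := by positivity
    rw [hqdef]; linarith
  have hbound : ∀ t : ℕ, μ {ω | ¬ ∃ t1 t2 : ℕ, t1 < t2 ∧ X t1 ω = c ∧ X t2 ω = c}
      ≤ 2 * ENNReal.ofReal (q ^ t) := by
    intro t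
    have hsub : {ω | ¬ ∃ t1 t2 : ℕ, t1 < t2 ∧ X t1 ω = c ∧ X t2 ω = c}
        ⊆ (⋂ s ∈ Finset.range t, X s ⁻¹' ({c}ᶜ : Set (Fin n)))
          ∪ (⋂ s ∈ Finset.Ico t (2*t), X s ⁻¹' ({c}ᶜ : Set (Fin n))) := by
      intro ω hω
      simp only [Set.mem_setOf_eq] at hω
      push_neg at hω
      by_contra hcon
      simp only [Set.mem_union, not_or, Set.mem_iInter, Finset.mem_range, Finset.mem_Ico,
        Set.mem_preimage, Set.mem_compl_iff, Set.mem_singleton_iff, not_forall, not_not] at hcon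
      obtain ⟨⟨s1, hs1, hx1⟩, ⟨s2, hs2, hx2⟩⟩ := hcon
      exact hω s1 s2 (by omega) hx1 hx2
    calc μ {ω | ¬ ∃ t1 t2 : ℕ, t1 < t2 ∧ X t1 ω = c ∧ X t2 ω = c}
        ≤ μ ((⋂ s ∈ Finset.range t, X s ⁻¹' ({c}ᶜ : Set (Fin n)))
            ∪ (⋂ s ∈ Finset.Ico t (2*t), X s ⁻¹' ({c}ᶜ : Set (Fin n)))) := measure_mono hsub
      _ ≤ μ (⋂ s ∈ Finset.range t, X s ⁻¹' ({c}ᶜ : Set (Fin n)))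
            + μ (⋂ s ∈ Finset.Ico t (2*t), X s ⁻¹' ({c}ᶜ : Set (Fin n))) := measure_union_le _ _
      _ = 2 * ENNReal.ofReal (q ^ t) := by
          rw [meas_avoid hn hmeas hindep hunif c, meas_avoid hn hmeas hindep hunif c,
            Finset.card_range, Nat.card_Ico, show 2*t - t = t from by omega, two_mul]
  have htend : Filter.Tendsto (fun t : ℕ => 2 * ENNReal.ofReal (q ^ t))
      Filter.atTop (nhds 0) := by
    have h1 : Filter.Tendsto (fun t : ℕ => q ^ t) Filter.atTop (nhds 0) :=
      tendsto_pow_atTop_nhds_zero_of_lt_one hq0 hq1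
    have h2 := (ENNReal.continuous_ofReal.tendsto 0).comp h1
    rw [ENNReal.ofReal_zero] at h2
    have h3 := ENNReal.Tendsto.const_mul (a := 2) h2 (Or.inr (by norm_num))
    rwa [mul_zero] at h3
  have hle : μ {ω | ¬ ∃ t1 t2 : ℕ, t1 < t2 ∧ X t1 ω = c ∧ X t2 ω = c} ≤ 0 :=
    ge_of_tendsto' htend hbound
  exact le_antisymm hle zero_le

private lemma prod_ite01 {α : Type*} (A : Finset α) (P : α → Prop) [DecidablePred P] :
    (∏ d ∈ A, if P d then (1:ℝ) else 0) = if ∀ d ∈ A, P d then (1:ℝ) else 0 := by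
  by_cases h : ∀ d ∈ A, P d
  · rw [if_pos h]; exact Finset.prod_eq_one fun d hd => if_pos (h d hd)
  · rw [if_neg h]
    push_neg at h
    obtain ⟨d, hd, hPd⟩ := h
    exact Finset.prod_eq_zero hd (if_neg hPd)

private lemma GG_measurable (hmeas : ∀ t, Measurable (X t)) (c : Fin n) (A : Finset (Fin n)) :
    MeasurableSet (GG X c A) :=
  MeasurableSet.iUnion fun p => DD_measurable hmeas c A p

private lemma pointwise_eq (hn : 1 ≤ n) {ω : Ω} (hω : ω ∈ Good X) {Tv : ℕ}
    (hT : Tv = sInf {t | ∀ c : Fin n, ∃ s < t, X s ω = c}) (c : Fin n) :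
    (if ((Finset.range Tv).filter (fun s => X s ω = c)).card = 1 then (1:ℝ) else 0)
      = ∑ A ∈ (Finset.univ.erase c).powerset,
          (-1:ℝ)^A.card * (GG X c A).indicator (fun _ => (1:ℝ)) ω := by
  classical
  set τ : Fin n → ℕ := fun d => sInf {s | X s ω = d} with hτdef
  have hτmem : ∀ d, X (τ d) ω = d := by
    intro d
    obtain ⟨t1, t2, h12, h1, h2⟩ := hω d
    exact Nat.sInf_mem (⟨t1, h1⟩ : {s | X s ω = d}.Nonempty)
  have hτmin : ∀ d s, s < τ d → X s ω ≠ d := fun d s hs => Nat.notMem_of_lt_sInf hs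
  have hσne : {s | τ c < s ∧ X s ω = c}.Nonempty := by
    obtain ⟨t1, t2, h12, h1, h2⟩ := hω c
    exact ⟨t2, lt_of_le_of_lt (Nat.sInf_le h1) h12, h2⟩
  set σ : ℕ := sInf {s | τ c < s ∧ X s ω = c} with hσdef
  have hσmem : τ c < σ ∧ X σ ω = c := Nat.sInf_mem hσne
  have hσmin : ∀ s, τ c < s → s < σ → X s ω ≠ c := by
    intro s h1 h2 hX
    exact Nat.notMem_of_lt_sInf h2 ⟨h1, hX⟩
  set m : ℕ := Finset.univ.sup τ with hmdef
  have hτlem : ∀ d, τ d ≤ m := fun d => Finset.le_sup (Finset.mem_univ d)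
  have hTm : Tv = m + 1 := by
    rw [hT]
    have hmem : (m+1) ∈ {t | ∀ d : Fin n, ∃ s < t, X s ω = d} :=
      fun d => ⟨τ d, by have := hτlem d; omega, hτmem d⟩
    refine le_antisymm (Nat.sInf_le hmem) ?_
    have hinf := Nat.sInf_mem (⟨m+1, hmem⟩ : {t | ∀ d : Fin n, ∃ s < t, X s ω = d}.Nonempty)
    have hall : ∀ d, τ d < sInf {t | ∀ d : Fin n, ∃ s < t, X s ω = d} := by
      intro d
      obtain ⟨s, hs, hX⟩ := hinf d
      exact lt_of_le_of_lt (Nat.sInf_le hX) hs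
    have hm : m < sInf {t | ∀ d : Fin n, ∃ s < t, X s ω = d} := by
      rw [hmdef]
      rw [Finset.sup_lt_iff (lt_of_le_of_lt (Nat.zero_le _) (hall c))]
      exact fun d _ => hall d
    omega
  have hτc_mem_filter : τ c ∈ (Finset.range Tv).filter (fun s => X s ω = c) := by
    rw [Finset.mem_filter, Finset.mem_range, hTm]
    exact ⟨by have := hτlem c; omega, hτmem c⟩
  have hcount : (((Finset.range Tv).filter (fun s => X s ω = c)).card = 1)
      ↔ ∀ d ∈ Finset.univ.erase c, ¬ σ < τ d := by
    constructor
    · intro h1 d hd hlt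
      obtain ⟨a, ha⟩ := Finset.card_eq_one.mp h1
      have hτa : τ c = a := by
        have := hτc_mem_filter
        rw [ha, Finset.mem_singleton] at this
        exact this
      have hσf : σ ∈ (Finset.range Tv).filter (fun s => X s ω = c) := by
        rw [Finset.mem_filter, Finset.mem_range, hTm]
        exact ⟨by have := hτlem d; omega, hσmem.2⟩
      rw [ha, Finset.mem_singleton] at hσf
      have := hσmem.1
      omega
    · intro h
      have hστ : ∀ d, τ d < σ := by
        intro d
        by_cases hdc : d = c
        · subst hdc; exact hσmem.1
        · have hne : τ d ≠ σ := by
            intro he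
            have : d = c := by rw [← hτmem d, he]; exact hσmem.2
            exact hdc this
          have := h d (Finset.mem_erase.mpr ⟨hdc, Finset.mem_univ d⟩)
          omega
      have hmσ : m < σ := by
        rw [hmdef]
        rw [Finset.sup_lt_iff (lt_of_le_of_lt (Nat.zero_le _) (hστ c))]
        exact fun d _ => hστ d
      have hfil : (Finset.range Tv).filter (fun s => X s ω = c) = {τ c} := by
        apply Finset.eq_singleton_iff_unique_mem.mpr
        refine ⟨hτc_mem_filter, ?_⟩
        intro s hs
        rw [Finset.mem_filter, Finset.mem_range, hTm] at hs
        obtain ⟨hsm, hsX⟩ := hs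
        have h1 : τ c ≤ s := Nat.sInf_le hsX
        rcases eq_or_lt_of_le h1 with he | hlt
        · exact he.symm
        · exfalso
          have : σ ≤ s := Nat.sInf_le ⟨hlt, hsX⟩
          omega
      rw [hfil, Finset.card_singleton]
  have hGGiff : ∀ A ∈ (Finset.univ.erase c).powerset,
      (ω ∈ GG X c A ↔ ∀ d ∈ A, σ < τ d) := by
    intro A hA
    rw [Finset.mem_powerset] at hA
    constructor
    · intro hmem
      obtain ⟨p, hp⟩ := Set.mem_iUnion.mp hmem
      rw [DD] at hp
      by_cases hp12 : p.1 < p.2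
      swap; · rw [if_neg hp12] at hp; exact absurd hp (Set.notMem_empty ω)
      rw [if_pos hp12] at hp
      obtain ⟨h1, h2, h3⟩ := hp
      have hτcp : τ c = p.1 := by
        have hle : τ c ≤ p.1 := Nat.sInf_le h1
        rcases eq_or_lt_of_le hle with he | hlt
        · exact he
        · exfalso
          exact h3 (τ c) (by omega) (by omega) (by rw [hτmem c]; exact Finset.mem_insert_self c A)
      have hσp : σ = p.2 := by
        have hle : σ ≤ p.2 := Nat.sInf_le ⟨by omega, h2⟩
        rcases eq_or_lt_of_le hle with he | hlt
        · exact he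
        · exfalso
          have hσ1 : σ ≠ p.1 := by have := hσmem.1; omega
          exact h3 σ hlt hσ1 (by rw [hσmem.2]; exact Finset.mem_insert_self c A)
      intro d hd
      have hdc : d ≠ c := (Finset.mem_erase.mp (hA hd)).1
      by_contra hle
      push_neg at hle
      have hXd := hτmem d
      have hd2 : τ d ≠ p.2 := by
        intro he; rw [he] at hXd; rw [h2] at hXd; exact hdc hXd.symm
      have hd1 : τ d ≠ p.1 := by
        intro he; rw [he] at hXd; rw [h1] at hXd; exact hdc hXd.symm
      have hdlt : τ d < p.2 := by omega
      exact h3 (τ d) hdlt hd1 (by rw [hXd]; exact Finset.mem_insert_of_mem hd)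
    · intro h
      refine Set.mem_iUnion.mpr ⟨(τ c, σ), ?_⟩
      rw [DD, if_pos hσmem.1]
      refine ⟨hτmem c, hσmem.2, ?_⟩
      intro s hs hs1 hmem'
      rcases Finset.mem_insert.mp hmem' with hc | hd
      · by_cases hsc : s < τ c
        · exact hτmin c s hsc hc
        · exact hσmin s (by omega) hs hc
      · set d := X s ω with hddef
        have : τ d ≤ s := Nat.sInf_le rfl
        have := h d hd
        omega
  have hlhs : (if ((Finset.range Tv).filter (fun s => X s ω = c)).card = 1 then (1:ℝ) else 0)
      = ∏ d ∈ Finset.univ.erase c, (if ¬ σ < τ d then (1:ℝ) else 0) := by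
    rw [prod_ite01 (Finset.univ.erase c) (fun d => ¬ σ < τ d)]
    by_cases h : ((Finset.range Tv).filter (fun s => X s ω = c)).card = 1
    · rw [if_pos h, if_pos (hcount.mp h)]
    · rw [if_neg h, if_neg (fun ha => h (hcount.mpr ha))]
  rw [hlhs]
  have hfac : ∀ d ∈ Finset.univ.erase c,
      (if ¬ σ < τ d then (1:ℝ) else 0)
        = -(if σ < τ d then (1:ℝ) else 0) + (1:ℝ) := by
    intro d _
    by_cases h : σ < τ d
    · rw [if_neg (not_not_intro h), if_pos h]; ring
    · rw [if_pos h, if_neg h]; ring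
  rw [Finset.prod_congr rfl hfac, Finset.prod_add]
  refine Finset.sum_congr rfl fun A hA => ?_
  rw [Finset.prod_const_one, mul_one]
  have : ∀ d ∈ A, -(if σ < τ d then (1:ℝ) else 0) = (-1) * (if σ < τ d then (1:ℝ) else 0) := by
    intro d _; ring
  rw [Finset.prod_congr rfl this, Finset.prod_mul_distrib, Finset.prod_const,
    prod_ite01 A (fun d => σ < τ d)]
  congr 1
  rw [Set.indicator_apply]
  by_cases hmem : ω ∈ GG X c A
  · rw [if_pos hmem, if_pos ((hGGiff A hA).mp hmem)]
  · rw [if_neg (fun hall => hmem ((hGGiff A hA).mpr hall)), if_neg hmem]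

end CC

private lemma key_sum (n : ℕ) (hn : 1 ≤ n) :
    ∑ a ∈ Finset.range n, ((n-1).choose a : ℝ) * ((-1:ℝ)^a * (1/((a:ℝ)+1)^2))
      = (∑ k ∈ Finset.Icc 1 n, (1:ℝ)/k) / n := by
  obtain ⟨N, rfl⟩ : ∃ N, n = N + 1 := ⟨n-1, by omega⟩
  have hN : ((N:ℝ) + 1) ≠ 0 := by positivity
  rw [eq_div_iff (by push_cast; exact hN), ← alt_choose_harmonic (N+1), Finset.sum_mul]
  refine Finset.sum_congr rfl fun a ha => ?_
  have hc : ((N:ℝ)+1) * (N.choose a : ℝ) = ((N+1).choose (a+1) : ℝ) * ((a:ℝ)+1) := by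
    exact_mod_cast congrArg (Nat.cast : ℕ → ℝ) (Nat.add_one_mul_choose_eq N a)
  have ha1 : ((a:ℝ)+1) ≠ 0 := by positivity
  simp only [Nat.add_sub_cancel]
  push_cast
  field_simp
  linear_combination hc

/-- Coupon collector: E[number of singleton types at completion time T] = H_n. -/
theorem coupon_collector_expected_singletons
    {Ω : Type*} [MeasurableSpace Ω] (μ : Measure Ω) [IsProbabilityMeasure μ]
    (n : ℕ) (hn : 1 ≤ n) (X : ℕ → Ω → Fin n)
    (hmeas : ∀ t, Measurable (X t))
    (hindep : iIndepFun X μ)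
    (hunif : ∀ t c, μ {ω | X t ω = c} = 1 / n)
    (T : Ω → ℕ)
    (hT : ∀ ω, T ω = sInf {t | ∀ c : Fin n, ∃ s < t, X s ω = c})
    (S : Ω → ℕ)
    (hS : ∀ ω, S ω = (Finset.univ.filter
        (fun c : Fin n =>
          ((Finset.range (T ω)).filter (fun s => X s ω = c)).card = 1)).card) :
    ∫ ω, (S ω : ℝ) ∂μ = ∑ k ∈ Finset.Icc 1 n, (1 : ℝ) / k := by
  classical
  have hGood : Good X ∈ ae μ := good_ae hn hmeas hindep hunif
  have hae : (fun ω => (S ω : ℝ)) =ᵐ[μ]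
      (fun ω => ∑ c : Fin n, ∑ A ∈ (Finset.univ.erase c).powerset,
        (-1:ℝ)^A.card * (GG X c A).indicator (fun _ => (1:ℝ)) ω) := by
    filter_upwards [hGood] with ω hω
    rw [hS ω, Finset.card_filter]
    push_cast
    exact Finset.sum_congr rfl fun c _ => pointwise_eq hn hω (hT ω) c
  rw [integral_congr_ae hae]
  have hInt : ∀ (c : Fin n) (A : Finset (Fin n)),
      Integrable (fun ω => (-1:ℝ)^A.card * (GG X c A).indicator (fun _ => (1:ℝ)) ω) μ := by
    intro c A
    exact ((integrable_indicator_iff (GG_measurable hmeas c A)).mpr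
      (integrableOn_const (measure_lt_top μ _).ne)).const_mul _
  rw [integral_finset_sum _ fun c _ => integrable_finset_sum _ fun A _ => hInt c A]
  have hcA : ∀ c : Fin n, ∫ ω, (∑ A ∈ (Finset.univ.erase c).powerset,
      (-1:ℝ)^A.card * (GG X c A).indicator (fun _ => (1:ℝ)) ω) ∂μ
      = (∑ k ∈ Finset.Icc 1 n, (1:ℝ)/k) / n := by
    intro c
    rw [integral_finset_sum _ fun A _ => hInt c A]
    have hterm : ∀ A ∈ (Finset.univ.erase c).powerset,
        ∫ ω, (-1:ℝ)^A.card * (GG X c A).indicator (fun _ => (1:ℝ)) ω ∂μ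
        = (-1:ℝ)^A.card * (1/((A.card:ℝ)+1)^2) := by
      intro A hA
      rw [integral_const_mul, integral_indicator_const (1:ℝ) (GG_measurable hmeas c A),
        measureReal_def, meas_GG hn hmeas hindep hunif (Finset.mem_powerset.mp hA),
        ENNReal.toReal_ofReal (by positivity), smul_eq_mul, mul_one]
    rw [Finset.sum_congr rfl hterm,
      Finset.sum_powerset_apply_card (f := fun k => (-1:ℝ)^k * (1/((k:ℝ)+1)^2))]
    have hcard : (Finset.univ.erase c).card = n - 1 := by
      rw [Finset.card_erase_of_mem (Finset.mem_univ c), Finset.card_univ, Fintype.card_fin]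
    rw [hcard, show n - 1 + 1 = n from by omega, ← key_sum n hn]
    refine Finset.sum_congr rfl fun a _ => ?_
    rw [nsmul_eq_mul]
  rw [Finset.sum_congr rfl fun c _ => hcA c, Finset.sum_const, Finset.card_univ,
    Fintype.card_fin, nsmul_eq_mul]
  field_simp
end

section
/- Under RSD, conditional on the history up to position ℓ-1, the probability that student ℓ envies a fixed earlier position k < ℓ equals 1/(n-ℓ+2). -/
open MeasureTheory

lemma rsd_count (n : ℕ) (A : Finset (Fin n)) (s : Fin n) (hs : s ∉ A) :
    (A.card + 1) * (Finset.univ.filter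
      (fun σ : Equiv.Perm (Fin n) => ∀ b ∈ A, σ s < σ b)).card = Nat.factorial n := by
  classical
  set E := Finset.univ.filter (fun σ : Equiv.Perm (Fin n) => ∀ b ∈ A, σ s < σ b) with hE
  set B : Finset (Fin n) := insert s A with hB
  have key : ∀ a ∈ B, ∀ τ ∈ E, ∀ b ∈ B, b ≠ a →
      (τ * Equiv.swap s a) a < (τ * Equiv.swap s a) b := by
    intro a ha τ hτ b hb hba
    simp only [hE, Finset.mem_filter] at hτ
    have hτ' := hτ.2
    simp only [Equiv.Perm.mul_apply, Equiv.swap_apply_right]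
    rcases eq_or_ne b s with rfl | hbs
    · rw [Equiv.swap_apply_left]
      have haA : a ∈ A := by
        rcases Finset.mem_insert.mp ha with h | h
        · exact absurd h.symm hba
        · exact h
      exact hτ' a haA
    · rw [Equiv.swap_apply_of_ne_of_ne hbs hba]
      have hbA : b ∈ A := by
        rcases Finset.mem_insert.mp hb with h | h
        · exact absurd h hbs
        · exact h
      exact hτ' b hbA
  have hcover : (Finset.univ : Finset (Equiv.Perm (Fin n))) =
      B.biUnion (fun a => E.image (fun τ => τ * Equiv.swap s a)) := by
    apply Finset.ext
    intro σ
    simp only [Finset.mem_univ, true_iff, Finset.mem_biUnion, Finset.mem_image]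
    have hne : (B.image σ).Nonempty :=
      ⟨σ s, Finset.mem_image_of_mem σ (Finset.mem_insert_self s A)⟩
    obtain ⟨a, haB, hva⟩ := Finset.mem_image.mp ((B.image σ).min'_mem hne)
    refine ⟨a, haB, σ * Equiv.swap s a, ?_, ?_⟩
    · simp only [hE, Finset.mem_filter, Finset.mem_univ, true_and]
      intro b hbA
      simp only [Equiv.Perm.mul_apply, Equiv.swap_apply_left]
      have hbs : b ≠ s := fun h => hs (h ▸ hbA)
      have hbB : Equiv.swap s a b ∈ B := by
        rcases eq_or_ne b a with rfl | hba
        · rw [Equiv.swap_apply_right]; exact Finset.mem_insert_self s A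
        · rw [Equiv.swap_apply_of_ne_of_ne hbs hba]
          exact Finset.mem_insert_of_mem hbA
      have hle : σ a ≤ σ (Equiv.swap s a b) := by
        rw [hva]; exact Finset.min'_le _ _ (Finset.mem_image_of_mem σ hbB)
      have hne2 : σ (Equiv.swap s a b) ≠ σ a := by
        intro h
        have h2 : Equiv.swap s a b = a := σ.injective h
        have h3 : b = s := by
          have := congrArg (Equiv.swap s a) h2
          simpa [Equiv.swap_apply_self, Equiv.swap_apply_right] using this
        exact hbs h3
      exact lt_of_le_of_ne hle (Ne.symm hne2)
    · ext x
      simp [Equiv.Perm.mul_apply, Equiv.swap_apply_self]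
  have hdisj : ∀ a₁ ∈ B, ∀ a₂ ∈ B, a₁ ≠ a₂ →
      Disjoint (E.image (fun τ => τ * Equiv.swap s a₁))
        (E.image (fun τ => τ * Equiv.swap s a₂)) := by
    intro a₁ h₁ a₂ h₂ h12
    rw [Finset.disjoint_left]
    rintro σ hσ1 hσ2
    obtain ⟨τ₁, hτ₁, rfl⟩ := Finset.mem_image.mp hσ1
    obtain ⟨τ₂, hτ₂, heq⟩ := Finset.mem_image.mp hσ2
    have k1 := key a₁ h₁ τ₁ hτ₁ a₂ h₂ (Ne.symm h12)
    have k2 := key a₂ h₂ τ₂ hτ₂ a₁ h₁ h12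
    rw [heq] at k2
    exact lt_irrefl _ (k1.trans k2)
  have hcard : Fintype.card (Equiv.Perm (Fin n)) = B.card * E.card := by
    rw [← Finset.card_univ, hcover, Finset.card_biUnion hdisj]
    have himg : ∀ a ∈ B, (E.image (fun τ => τ * Equiv.swap s a)).card = E.card :=
      fun a _ => Finset.card_image_of_injective E (mul_left_injective _)
    rw [Finset.sum_congr rfl himg, Finset.sum_const, smul_eq_mul]
  have hBcard : B.card = A.card + 1 := Finset.card_insert_of_notMem hs
  rw [← hBcard, ← hcard]
  simp [Fintype.card_perm]

/-- RSD: conditional on the history, student ℓ envies a fixed earlier position k < ℓ with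
    probability 1/(n-ℓ+2). Student ℓ's preference is a uniformly random ranking π (lower value
    = more preferred); A is the set of n-ℓ+1 available schools and s ∉ A is the school chosen
    at position k. Student ℓ envies position k iff s is her most preferred in A ∪ {s}. -/
theorem rsd_envy_probability
    {Ω : Type*} [MeasurableSpace Ω] (μ : Measure Ω) [IsProbabilityMeasure μ]
    (n k ℓ : ℕ) (hk : 1 ≤ k) (hkℓ : k < ℓ) (hℓn : ℓ ≤ n)
    (π : Ω → Equiv.Perm (Fin n))
    (hunif : ∀ σ : Equiv.Perm (Fin n), μ {ω | π ω = σ} = 1 / Nat.factorial n)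
    (A : Finset (Fin n)) (hA : A.card = n - ℓ + 1)
    (s : Fin n) (hs : s ∉ A) :
    (μ {ω | ∀ b ∈ A, π ω s < π ω b}).toReal = 1 / ((n : ℝ) - ℓ + 2) := by
  classical
  set E := Finset.univ.filter (fun σ : Equiv.Perm (Fin n) => ∀ b ∈ A, σ s < σ b) with hE
  set F := Finset.univ.filter (fun σ : Equiv.Perm (Fin n) => ¬ ∀ b ∈ A, σ s < σ b) with hF
  set N := Nat.factorial n with hN
  have hNpos : 0 < N := Nat.factorial_pos n
  have hcount := rsd_count n A s hs
  rw [hA] at hcount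
  -- card E + card F = N
  have hEF : E.card + F.card = N := by
    rw [hE, hF, Finset.card_filter_add_card_filter_not, Finset.card_univ]
    simp [Fintype.card_perm, hN]
  have hNne : (N : ENNReal) ≠ 0 := by exact_mod_cast hNpos.ne'
  have hNnt : (N : ENNReal) ≠ ⊤ := ENNReal.natCast_ne_top N
  set S := {ω | ∀ b ∈ A, π ω s < π ω b} with hS
  -- upper bound
  have hSsub : S ⊆ ⋃ σ ∈ E, {ω | π ω = σ} := by
    intro ω hω
    exact Set.mem_biUnion (Finset.mem_filter.mpr ⟨Finset.mem_univ _, hω⟩) rfl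
  have hup : μ S ≤ (E.card : ENNReal) / N := by
    calc μ S ≤ ∑ σ ∈ E, μ {ω | π ω = σ} :=
          le_trans (measure_mono hSsub) (measure_biUnion_finset_le E _)
      _ = (E.card : ENNReal) / N := by
          rw [Finset.sum_congr rfl (fun σ _ => hunif σ), Finset.sum_const, nsmul_eq_mul,
            mul_one_div]
  have hScsub : Sᶜ ⊆ ⋃ σ ∈ F, {ω | π ω = σ} := by
    intro ω hω
    exact Set.mem_biUnion (Finset.mem_filter.mpr ⟨Finset.mem_univ _, hω⟩) rfl
  have hupc : μ Sᶜ ≤ (F.card : ENNReal) / N := by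
    calc μ Sᶜ ≤ ∑ σ ∈ F, μ {ω | π ω = σ} :=
          le_trans (measure_mono hScsub) (measure_biUnion_finset_le F _)
      _ = (F.card : ENNReal) / N := by
          rw [Finset.sum_congr rfl (fun σ _ => hunif σ), Finset.sum_const, nsmul_eq_mul,
            mul_one_div]
  have hone : (1 : ENNReal) ≤ μ S + μ Sᶜ := by
    have : μ Set.univ ≤ μ S + μ Sᶜ := by
      rw [← Set.union_compl_self S]; exact measure_union_le S Sᶜ
    simpa using this
  have hsplit : (E.card : ENNReal) / N + (F.card : ENNReal) / N = 1 := by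
    rw [ENNReal.div_add_div_same, ← Nat.cast_add, hEF, ENNReal.div_self hNne hNnt]
  have hlo : (E.card : ENNReal) / N ≤ μ S := by
    have h1 : (E.card : ENNReal) / N + (F.card : ENNReal) / N ≤ μ S + (F.card : ENNReal) / N := by
      rw [hsplit]
      exact hone.trans (add_le_add le_rfl hupc)
    have hFfin : (F.card : ENNReal) / N ≠ ⊤ :=
      (ENNReal.div_lt_top (ENNReal.natCast_ne_top _) hNne).ne
    exact (ENNReal.add_le_add_iff_right hFfin).mp h1
  have hμ : μ S = (E.card : ENNReal) / N := le_antisymm hup hlo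
  rw [hμ, ENNReal.toReal_div]
  norm_num
  -- final arithmetic
  have hEpos : 0 < E.card := by
    by_contra h
    push_neg at h
    interval_cases c : E.card <;> omega
  have hNc : (N : ℝ) = ((n - ℓ + 2 : ℕ) : ℝ) * E.card := by
    exact_mod_cast hcount.symm
  have hcast : ((n - ℓ + 2 : ℕ) : ℝ) = (n : ℝ) - ℓ + 2 := by
    push_cast [Nat.cast_sub hℓn]
    ring
  rw [hNc, hcast]
  have h2 : (0:ℝ) < (n : ℝ) - ℓ + 2 := by
    rw [← hcast]; positivity
  field_simp
end
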